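/- Upper bound of Theorem 4.3: Fix a profile (f_1,…,f_n) of piecewise constant value density functions and a piecewise constant misreport f_1' by agent 1. Let A and y_1 be the MNW allocation and fraction computed by the Partial Allocation mechanism for the profile (f_1,…,f_n), and let A' and y_1' be those computed for (f_1', f_2,…,f_n). Then v_1(A_1') ≤ e · y_1 · v_1(A_1). Since the piece agent 1 receives from the PA mechanism after misreporting is contained in A_1' and his truthful PA utility is y_1 · v_1(A_1), the incentive ratio of the Partial Allocation mechanism in cake cutting is at most e. -/

import Mathlib

/-!
All densities are constant on the cells of one common grid. There an allocation is described by
the matrix of shares `x j s` of cell `s` held by agent `j`; values are linear in the shares, and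
every feasible share matrix is realised by stacking intervals inside each cell. Hence the MNW
allocation `A'` of the misreported profile maximises a Nash product of linear utilities `u j`
over a convex polytope, and first-order optimality at its shares `x` gives
`∑ j, u j y / u j x ≤ n + 1` for every feasible `y`. For the shares `y` of `A1`, the bound
`q ≤ exp (q - 1)` turns this into `∏ j ≠ 0, v j (A1 j) ≤ e * ∏ j ≠ 0, v j (A' j)`, since agents
`j ≠ 0` report truthfully. Optimality of `A` for the true profile against `A'` gives
`v 0 (A' 0) * ∏ j ≠ 0, v j (A' j) ≤ v 0 (A 0) * ∏ j ≠ 0, v j (A j)`, and the two combine to the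
claim.
-/

open MeasureTheory Set

noncomputable def cakeval (f : ℝ → ℝ) (S : Set ℝ) : ℝ := ∫ x in S, f x

def PiecewiseConstant (f : ℝ → ℝ) : Prop :=
  ∃ (m : ℕ) (a : Fin (m + 1) → ℝ) (c : Fin m → ℝ),
    a 0 = 0 ∧ a (Fin.last m) = 1 ∧ Monotone a ∧
    ∀ t : Fin m, ∀ x ∈ Set.Ico (a t.castSucc) (a t.succ), f x = c t

def ValidDensity (f : ℝ → ℝ) : Prop :=
  PiecewiseConstant f ∧ (∀ x, 0 ≤ f x) ∧ 0 < cakeval f (Set.Icc 0 1)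

def FinUnionIcc (S : Set ℝ) : Prop :=
  ∃ (k : ℕ) (a b : Fin k → ℝ), S = ⋃ j, Set.Icc (a j) (b j)

def IsAllocOn {n : ℕ} (C : Set ℝ) (A : Fin n → Set ℝ) : Prop :=
  (∀ i, A i ⊆ C) ∧ (∀ i, FinUnionIcc (A i)) ∧
    Pairwise fun i j => volume (A i ∩ A j) = 0

def IsAlloc {n : ℕ} (A : Fin n → Set ℝ) : Prop := IsAllocOn (Set.Icc 0 1) A

def CompleteAlloc {n : ℕ} (A : Fin n → Set ℝ) : Prop := (⋃ i, A i) = Set.Icc (0 : ℝ) 1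

noncomputable def nashProd {n : ℕ} (f : Fin n → ℝ → ℝ) (A : Fin n → Set ℝ) : ℝ :=
  ∏ i, cakeval (f i) (A i)

def IsMNWOn {n : ℕ} (C : Set ℝ) (f : Fin n → ℝ → ℝ) (A : Fin n → Set ℝ) : Prop :=
  IsAllocOn C A ∧ ∀ B : Fin n → Set ℝ, IsAllocOn C B → nashProd f B ≤ nashProd f A

def IsMNW {n : ℕ} (f : Fin n → ℝ → ℝ) (A : Fin n → Set ℝ) : Prop :=
  IsMNWOn (Set.Icc 0 1) f A

def IsCompleteMNW {n : ℕ} (f : Fin n → ℝ → ℝ) (A : Fin n → Set ℝ) : Prop :=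
  IsAlloc A ∧ CompleteAlloc A ∧
    ∀ B : Fin n → Set ℝ, IsAlloc B → CompleteAlloc B → nashProd f B ≤ nashProd f A

/-- An MNW allocation of the whole cake among the agents other than `i`: agent `i`
receives nothing and the allocation maximizes the Nash product of the remaining
agents' values. -/
def IsMNWWithout {n : ℕ} (f : Fin n → ℝ → ℝ) (i : Fin n) (B : Fin n → Set ℝ) : Prop :=
  IsAlloc B ∧ B i = ∅ ∧
    ∀ B' : Fin n → Set ℝ, IsAlloc B' → B' i = ∅ →
      (∏ j ∈ Finset.univ.erase i, cakeval (f j) (B' j)) ≤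
        ∏ j ∈ Finset.univ.erase i, cakeval (f j) (B j)

section NashProduct

open Finset

lemma prod_le_exp_one_of_sum_le_card_add_one {ι : Type*} {s : Finset ι} {q : ι → ℝ}
    (hq : ∀ i ∈ s, 0 ≤ q i) (hsum : ∑ i ∈ s, q i ≤ #s + 1) :
    ∏ i ∈ s, q i ≤ Real.exp 1 :=
  calc ∏ i ∈ s, q i ≤ ∏ i ∈ s, Real.exp (q i - 1) :=
        prod_le_prod hq fun i _ => by linarith [Real.add_one_le_exp (q i - 1)]
    _ = Real.exp (∑ i ∈ s, q i - #s) := by simp [← Real.exp_sum, sum_sub_distrib]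
    _ ≤ Real.exp 1 := Real.exp_le_exp.2 (by linarith)

variable {ι : Type*} [Fintype ι]

lemma sum_prod_erase_mul_nonpos_of_prod_le [DecidableEq ι] (a d : ι → ℝ)
    (h : ∀ t ∈ Icc (0 : ℝ) 1, ∏ j, (a j + t * d j) ≤ ∏ j, a j) :
    ∑ j, (∏ k ∈ univ.erase j, a k) * d j ≤ 0 := by
  have hderiv : HasDerivAt (fun t : ℝ => ∏ j, (a j + t * d j))
      (∑ j, (∏ k ∈ univ.erase j, (a k + 0 * d k)) • d j) 0 :=
    HasDerivAt.fun_finsetProd fun j _ => by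
      simpa using ((hasDerivAt_id (0 : ℝ)).mul_const (d j)).const_add (a j)
  have hmax : IsLocalMaxOn (fun t : ℝ => ∏ j, (a j + t * d j)) (Icc 0 1) 0 :=
    IsMaxOn.localize fun t ht => by simpa using h t ht
  have hcone : (1 : ℝ) ∈ posTangentConeAt (Icc (0 : ℝ) 1) 0 :=
    mem_posTangentConeAt_of_segment_subset (by simp [segment_eq_Icc])
  simpa using hmax.hasFDerivWithinAt_nonpos hderiv.hasFDerivAt.hasFDerivWithinAt hcone

theorem sum_div_le_card_of_isMaxOn_prod {E : Type*} [AddCommGroup E] [Module ℝ E]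
    {K : Set E} (hK : Convex ℝ K) {u : ι → E →ₗ[ℝ] ℝ} {x y : E}
    (hmax : IsMaxOn (fun z => ∏ j, u j z) K x) (hx : x ∈ K) (hy : y ∈ K)
    (hpos : ∀ j, 0 < u j x) :
    ∑ j, u j y / u j x ≤ Fintype.card ι := by
  classical
  have hline : ∀ t ∈ Icc (0 : ℝ) 1,
      ∏ j, (u j x + t * (u j y - u j x)) ≤ ∏ j, u j x := fun t ht => by
    simpa [map_add, map_smul, map_sub] using hmax (hK.add_smul_sub_mem hx hy ht)
  have hnonpos := sum_prod_erase_mul_nonpos_of_prod_le _ _ hline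
  have hprod : 0 < ∏ j, u j x := prod_pos fun j _ => hpos j
  have hsum : ∑ j, (∏ k ∈ univ.erase j, u k x) * (u j y - u j x)
      = (∏ j, u j x) * ∑ j, (u j y / u j x - 1) := by
    rw [mul_sum]
    refine sum_congr rfl fun j _ => ?_
    rw [← prod_erase_mul _ _ (mem_univ j)]
    field_simp [(hpos j).ne']
  rw [hsum] at hnonpos
  have := nonpos_of_mul_nonpos_right hnonpos hprod
  simpa [sum_sub_distrib] using this

theorem prod_erase_le_exp_one_mul_of_isMaxOn_prod [DecidableEq ι] {E : Type*} [AddCommGroup E]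
    [Module ℝ E] {K : Set E} (hK : Convex ℝ K) {u : ι → E →ₗ[ℝ] ℝ} {x y : E}
    (hmax : IsMaxOn (fun z => ∏ j, u j z) K x) (hx : x ∈ K) (hy : y ∈ K)
    (hpos : ∀ j, 0 < u j x) (hy0 : ∀ j, 0 ≤ u j y) (i : ι) :
    ∏ j ∈ univ.erase i, u j y ≤ Real.exp 1 * ∏ j ∈ univ.erase i, u j x := by
  have hq : ∀ j, 0 ≤ u j y / u j x := fun j => div_nonneg (hy0 j) (hpos j).le
  have hsum : ∑ j ∈ univ.erase i, u j y / u j x ≤ #(univ.erase i) + 1 := by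
    rw [card_erase_of_mem (mem_univ i), card_univ, Nat.cast_sub (Fintype.card_pos_iff.2 ⟨i⟩),
      Nat.cast_one, sub_add_cancel]
    exact (sum_le_sum_of_subset_of_nonneg (erase_subset i univ) fun j _ _ => hq j).trans
      (sum_div_le_card_of_isMaxOn_prod hK hmax hx hy hpos)
  have hexp := prod_le_exp_one_of_sum_le_card_add_one (fun j _ => hq j) hsum
  rw [prod_div_distrib] at hexp
  rwa [div_le_iff₀ (prod_pos fun j _ => hpos j)] at hexp

end NashProduct

def shareSet (ι σ : Type*) [Fintype ι] : Set (ι → σ → ℝ) :=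
  {y | (∀ j s, 0 ≤ y j s) ∧ ∀ s, ∑ j, y j s ≤ 1}

lemma convex_shareSet (ι σ : Type*) [Fintype ι] : Convex ℝ (shareSet ι σ) := by
  rintro y ⟨hy0, hy1⟩ z ⟨hz0, hz1⟩ a b ha hb hab
  refine ⟨fun j s => ?_, fun s => ?_⟩
  · simp only [Pi.add_apply, Pi.smul_apply, smul_eq_mul]
    exact add_nonneg (mul_nonneg ha (hy0 j s)) (mul_nonneg hb (hz0 j s))
  · simp only [Pi.add_apply, Pi.smul_apply, smul_eq_mul, Finset.sum_add_distrib, ← Finset.mul_sum]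
    nlinarith [hy1 s, hz1 s]

def shareValue {ι σ : Type*} [Fintype σ] (V : ι → σ → ℝ) (j : ι) : (ι → σ → ℝ) →ₗ[ℝ] ℝ where
  toFun y := ∑ s, y j s * V j s
  map_add' y z := by simp only [Pi.add_apply, add_mul, Finset.sum_add_distrib]
  map_smul' a y := by
    simp only [Pi.smul_apply, smul_eq_mul, mul_assoc, ← Finset.mul_sum, RingHom.id_apply]

def gridCell {m : ℕ} (r : Fin (m + 1) → ℝ) (s : Fin m) : Set ℝ := Ico (r s.castSucc) (r s.succ)

def cellLength {m : ℕ} (r : Fin (m + 1) → ℝ) (s : Fin m) : ℝ := r s.succ - r s.castSucc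

structure IsGrid {m : ℕ} (r : Fin (m + 1) → ℝ) : Prop where
  strictMono : StrictMono r
  apply_zero : r 0 = 0
  apply_last : r (Fin.last m) = 1

def ConstOnCells {m : ℕ} (r : Fin (m + 1) → ℝ) (f : ℝ → ℝ) (c : Fin m → ℝ) : Prop :=
  ∀ s, ∀ x ∈ gridCell r s, f x = c s

lemma measurableSet_gridCell {m : ℕ} (r : Fin (m + 1) → ℝ) (s : Fin m) :
    MeasurableSet (gridCell r s) :=
  measurableSet_Ico

section Grid

variable {m : ℕ} {r : Fin (m + 1) → ℝ}

lemma exists_mem_gridCell {u : ℝ} (h0 : r 0 ≤ u) (h1 : u < r (Fin.last m)) :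
    ∃ s, u ∈ gridCell r s := by
  classical
  set S := Finset.univ.filter fun i => r i ≤ u
  have hS : S.Nonempty := ⟨0, by simpa [S] using h0⟩
  have hmax : r (S.max' hS) ≤ u := (Finset.mem_filter.1 (S.max'_mem hS)).2
  have hne : S.max' hS ≠ Fin.last m := fun h => (h ▸ hmax).not_gt h1
  refine ⟨(S.max' hS).castPred hne, by simpa [gridCell] using hmax, ?_⟩
  by_contra! hle
  have := S.le_max' _ (Finset.mem_filter.2 ⟨Finset.mem_univ _, hle⟩)
  exact (Fin.castSucc_castPred _ hne ▸ Fin.castSucc_lt_succ).not_ge this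

lemma Monotone.apply_succ_le_apply_castSucc (hr : Monotone r) {s t : Fin m} (hst : s < t) :
    r s.succ ≤ r t.castSucc :=
  hr (Fin.succ_le_castSucc_iff.2 hst)

lemma Monotone.pairwise_disjoint_gridCell (hr : Monotone r) :
    Pairwise fun s t => Disjoint (gridCell r s) (gridCell r t) := by
  intro s t hst
  have key : ∀ {s t : Fin m}, s < t → Disjoint (gridCell r s) (gridCell r t) := fun h =>
    Ico_disjoint_Ico.2 <| (min_le_left _ _).trans <|
      (hr.apply_succ_le_apply_castSucc h).trans (le_max_right _ _)
  exact hst.lt_or_gt.elim key fun h => (key h).symm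

namespace IsGrid

variable (hr : IsGrid r)
include hr

lemma monotone : Monotone r := hr.strictMono.monotone

lemma gridCell_subset_Ico (s : Fin m) : gridCell r s ⊆ Ico 0 1 := fun _ hx =>
  ⟨hr.apply_zero ▸ (hr.monotone (Fin.zero_le _)).trans hx.1,
    hr.apply_last ▸ hx.2.trans_le (hr.monotone (Fin.le_last _))⟩

lemma iUnion_gridCell : ⋃ s, gridCell r s = Ico 0 1 := by
  refine subset_antisymm (iUnion_subset hr.gridCell_subset_Ico) fun u hu => ?_
  rw [← hr.apply_zero, ← hr.apply_last] at hu
  exact mem_iUnion.2 (exists_mem_gridCell hu.1 hu.2)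

lemma volume_real_gridCell (s : Fin m) : volume.real (gridCell r s) = cellLength r s := by
  rw [gridCell, cellLength, Real.volume_real_Ico, max_eq_left]
  exact sub_nonneg.2 (hr.monotone Fin.castSucc_lt_succ.le)

lemma cakeval_eq_sum {f : ℝ → ℝ} {c : Fin m → ℝ} (hf : ConstOnCells r f c) {S : Set ℝ}
    (hS : MeasurableSet S) (hS1 : S ⊆ Icc 0 1) :
    cakeval f S = ∑ s, c s * volume.real (S ∩ gridCell r s) := by
  have hae : S =ᵐ[volume] ⋃ s, S ∩ gridCell r s := by
    rw [← inter_iUnion, hr.iUnion_gridCell]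
    have := (ae_eq_refl S).inter (Ico_ae_eq_Icc (μ := volume) (a := (0 : ℝ)) (b := 1)).symm
    rwa [inter_eq_left.2 hS1] at this
  have hcell : ∀ s, EqOn f (fun _ => c s) (S ∩ gridCell r s) := fun s x hx => hf s x hx.2
  have hmeas : ∀ s, MeasurableSet (S ∩ gridCell r s) := fun s =>
    hS.inter (measurableSet_gridCell r s)
  have hdisj : Pairwise fun s t => Disjoint (S ∩ gridCell r s) (S ∩ gridCell r t) := fun s t hst =>
    (hr.monotone.pairwise_disjoint_gridCell hst).mono inter_subset_right inter_subset_right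
  rw [cakeval, setIntegral_congr_set hae, integral_iUnion_fintype hmeas hdisj
    (fun s => (integrableOn_const ?_).congr_fun (hcell s).symm (hmeas s))]
  · refine Finset.sum_congr rfl fun s _ => ?_
    rw [setIntegral_congr_fun (hmeas s) (hcell s), setIntegral_const, smul_eq_mul, mul_comm]
  · exact ((measure_mono inter_subset_right).trans_lt measure_Ico_lt_top).ne

end IsGrid

end Grid

lemma IsGrid.exists_gridCell_subset {m M : ℕ} {r : Fin (m + 1) → ℝ} (hr : IsGrid r)
    {a : Fin (M + 1) → ℝ} (ha0 : a 0 = 0) (ha1 : a (Fin.last M) = 1) (ha : ∀ t, a t ∈ range r)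
    (s : Fin m) : ∃ t, gridCell r s ⊆ gridCell a t := by
  have hs : r s.castSucc ∈ Ico 0 1 :=
    hr.gridCell_subset_Ico s ⟨le_rfl, hr.strictMono Fin.castSucc_lt_succ⟩
  obtain ⟨t, ht⟩ := exists_mem_gridCell (r := a) (ha0 ▸ hs.1) (ha1 ▸ hs.2)
  obtain ⟨k, hk⟩ := ha t.succ
  have hsk : s.succ ≤ k :=
    Fin.castSucc_lt_iff_succ_le.1 (hr.strictMono.lt_iff_lt.1 (hk ▸ ht.2))
  exact ⟨t, fun x hx => ⟨ht.1.trans hx.1, hx.2.trans_le (hk ▸ hr.monotone hsk)⟩⟩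

lemma exists_isGrid_range_eq (T : Finset ℝ) (hT : ∀ x ∈ T, x ∈ Icc (0 : ℝ) 1) (h0 : 0 ∈ T)
    (h1 : 1 ∈ T) : ∃ (m : ℕ) (r : Fin (m + 1) → ℝ), IsGrid r ∧ range r = T := by
  have hcard : T.card = T.card - 1 + 1 := (Nat.sub_add_cancel (Finset.card_pos.2 ⟨0, h0⟩)).symm
  set e := T.orderEmbOfFin hcard
  refine ⟨T.card - 1, e, ⟨e.strictMono, ?_, ?_⟩, T.range_orderEmbOfFin hcard⟩
  · rw [show (0 : Fin (T.card - 1 + 1)) = ⟨0, Nat.succ_pos _⟩ from rfl,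
      Finset.orderEmbOfFin_zero hcard]
    exact le_antisymm (T.min'_le 0 h0) (hT _ (T.min'_mem _)).1
  · rw [show Fin.last (T.card - 1) = ⟨T.card - 1 + 1 - 1, by omega⟩ from rfl,
      Finset.orderEmbOfFin_last hcard (Nat.succ_pos _)]
    exact le_antisymm (hT _ (T.max'_mem _)).2 (T.le_max' 1 h1)

theorem exists_isGrid_constOnCells {ι : Type*} [Fintype ι] {F : ι → ℝ → ℝ}
    (hF : ∀ i, PiecewiseConstant (F i)) :
    ∃ (m : ℕ) (r : Fin (m + 1) → ℝ) (c : ι → Fin m → ℝ),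
      IsGrid r ∧ ∀ i, ConstOnCells r (F i) (c i) := by
  classical
  choose M a c ha0 ha1 hmono hc using hF
  have ha : ∀ i t, a i t ∈ Icc (0 : ℝ) 1 := fun i t =>
    ⟨ha0 i ▸ hmono i (Fin.zero_le t), ha1 i ▸ hmono i (Fin.le_last t)⟩
  set T := insert 0 (insert 1 (Finset.univ.biUnion fun i => Finset.univ.image (a i)))
  have hT : ∀ x ∈ T, x ∈ Icc (0 : ℝ) 1 := by
    simp only [T, Finset.mem_insert, Finset.mem_biUnion, Finset.mem_image]
    rintro x (rfl | rfl | ⟨i, -, t, -, rfl⟩)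
    exacts [⟨le_rfl, zero_le_one⟩, ⟨zero_le_one, le_rfl⟩, ha i t]
  have haT : ∀ i t, a i t ∈ T := fun i t =>
    Finset.mem_insert_of_mem <| Finset.mem_insert_of_mem <| Finset.mem_biUnion.2
      ⟨i, Finset.mem_univ _, Finset.mem_image_of_mem _ (Finset.mem_univ t)⟩
  obtain ⟨m, r, hr, hrT⟩ := exists_isGrid_range_eq T hT (by simp [T]) (by simp [T])
  have hsub : ∀ i s, ∃ t, gridCell r s ⊆ gridCell (a i) t := fun i =>
    hr.exists_gridCell_subset (ha0 i) (ha1 i) fun t => hrT ▸ haT i t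
  choose t ht using hsub
  exact ⟨m, r, fun i s => c i (t i s), hr, fun i s x hx => hc i (t i s) x (ht i s hx)⟩

lemma FinUnionIcc.measurableSet {S : Set ℝ} (h : FinUnionIcc S) : MeasurableSet S := by
  obtain ⟨k, a, b, rfl⟩ := h
  exact MeasurableSet.iUnion fun j => measurableSet_Icc

noncomputable def cellShare {m N : ℕ} (r : Fin (m + 1) → ℝ) (B : Fin N → Set ℝ) (j : Fin N)
    (s : Fin m) : ℝ :=
  volume.real (B j ∩ gridCell r s) / cellLength r s

namespace IsGrid

variable {m N : ℕ} {r : Fin (m + 1) → ℝ} (hr : IsGrid r)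
include hr

lemma cellLength_pos (s : Fin m) : 0 < cellLength r s :=
  sub_pos.2 (hr.strictMono Fin.castSucc_lt_succ)

lemma cellShare_mem_shareSet {B : Fin N → Set ℝ} (hB : IsAlloc B) :
    cellShare r B ∈ shareSet (Fin N) (Fin m) := by
  refine ⟨fun j s => div_nonneg measureReal_nonneg (hr.cellLength_pos s).le, fun s => ?_⟩
  have hmeas : ∀ j, MeasurableSet (B j) := fun j => (hB.2.1 j).measurableSet
  have hfin : ∀ j, volume (B j ∩ gridCell r s) ≠ ⊤ := fun j =>
    ((measure_mono inter_subset_right).trans_lt measure_Ico_lt_top).ne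
  have hsum : ∑ j, volume.real (B j ∩ gridCell r s) ≤ cellLength r s := by
    rw [← measureReal_biUnion_finset₀ (fun i _ j _ hij => measure_mono_null
        (inter_subset_inter inter_subset_left inter_subset_left) (hB.2.2 hij))
      (fun j _ => ((hmeas j).inter (measurableSet_gridCell r s)).nullMeasurableSet)
      (fun j _ => hfin j),
      ← hr.volume_real_gridCell s]
    exact measureReal_mono (iUnion₂_subset fun j _ => inter_subset_right) measure_Ico_lt_top.ne
  simp only [cellShare]
  rw [← Finset.sum_div, div_le_one (hr.cellLength_pos s)]
  exact hsum

lemma cakeval_eq_sum_cellShare {f : ℝ → ℝ} {c : Fin m → ℝ} (hf : ConstOnCells r f c)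
    {B : Fin N → Set ℝ} (hB : IsAlloc B) (j : Fin N) :
    cakeval f (B j) = ∑ s, cellShare r B j s * (c s * cellLength r s) := by
  rw [hr.cakeval_eq_sum hf (hB.2.1 j).measurableSet (hB.1 j)]
  refine Finset.sum_congr rfl fun s _ => ?_
  rw [cellShare]
  field_simp [(hr.cellLength_pos s).ne']

end IsGrid

lemma volume_Icc_inter_Icc_eq_zero_of_le {a b c d : ℝ} (h : b ≤ c) :
    volume (Icc a b ∩ Icc c d) = 0 := by
  rw [Icc_inter_Icc, Real.volume_Icc, ENNReal.ofReal_eq_zero]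
  exact sub_nonpos.2 ((min_le_left _ _).trans (h.trans (le_max_right _ _)))

lemma Monotone.volume_Icc_inter_Icc_eq_zero {m : ℕ} {r : Fin (m + 1) → ℝ} (hr : Monotone r)
    {s t : Fin m} (hst : s ≠ t) :
    volume (Icc (r s.castSucc) (r s.succ) ∩ Icc (r t.castSucc) (r t.succ)) = 0 := by
  rcases hst.lt_or_gt with h | h
  · exact volume_Icc_inter_Icc_eq_zero_of_le (hr.apply_succ_le_apply_castSucc h)
  · rw [inter_comm]
    exact volume_Icc_inter_Icc_eq_zero_of_le (hr.apply_succ_le_apply_castSucc h)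

section PrefixSum

variable {α : Type*} [PartialOrder α] [LocallyFiniteOrderBot α] {w : α → ℝ}

lemma sum_Iio_add_le_sum_Iio (hw : ∀ k, 0 ≤ w k) {i j : α} (hij : i < j) :
    ∑ k ∈ Finset.Iio i, w k + w i ≤ ∑ k ∈ Finset.Iio j, w k := by
  rw [Finset.sum_Iio_add_eq_sum_Iic]
  exact Finset.sum_le_sum_of_subset_of_nonneg
    (fun k hk => Finset.mem_Iio.2 ((Finset.mem_Iic.1 hk).trans_lt hij)) fun k _ _ => hw k

lemma sum_Iio_add_le_sum [Fintype α] (hw : ∀ k, 0 ≤ w k) (j : α) :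
    ∑ k ∈ Finset.Iio j, w k + w j ≤ ∑ k, w k := by
  rw [Finset.sum_Iio_add_eq_sum_Iic]
  exact Finset.sum_le_sum_of_subset_of_nonneg (Finset.subset_univ _) fun k _ _ => hw k

end PrefixSum

section Stacking

variable {m N : ℕ} (r : Fin (m + 1) → ℝ) (y : Fin N → Fin m → ℝ)

def stackStart (j : Fin N) (s : Fin m) : ℝ :=
  r s.castSucc + cellLength r s * ∑ k ∈ Finset.Iio j, y k s

def stackPiece (j : Fin N) (s : Fin m) : Set ℝ :=
  Icc (stackStart r y j s) (stackStart r y j s + cellLength r s * y j s)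

def stackAlloc (j : Fin N) : Set ℝ := ⋃ s, stackPiece r y j s

variable {r y}

namespace IsGrid

variable (hr : IsGrid r) (hy : y ∈ shareSet (Fin N) (Fin m))
include hr hy

lemma stackPiece_subset_Icc (j : Fin N) (s : Fin m) :
    stackPiece r y j s ⊆ Icc (r s.castSucc) (r s.succ) := by
  have hlen := (hr.cellLength_pos s).le
  have hsum := (sum_Iio_add_le_sum (fun k => hy.1 k s) j).trans (hy.2 s)
  have hlo : 0 ≤ ∑ k ∈ Finset.Iio j, y k s := Finset.sum_nonneg fun k _ => hy.1 k s
  refine fun x hx => ⟨le_trans ?_ hx.1, hx.2.trans ?_⟩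
  · exact le_add_of_nonneg_right (mul_nonneg hlen hlo)
  · have : r s.succ = r s.castSucc + cellLength r s * 1 := by rw [cellLength]; ring
    rw [stackStart, this, add_assoc, ← mul_add]
    gcongr

lemma stackStart_add_le_stackStart {i j : Fin N} (hij : i < j) (s : Fin m) :
    stackStart r y i s + cellLength r s * y i s ≤ stackStart r y j s := by
  rw [stackStart, stackStart, add_assoc, ← mul_add]
  gcongr
  · exact (hr.cellLength_pos s).le
  · exact sum_Iio_add_le_sum_Iio (fun k => hy.1 k s) hij

lemma volume_stackPiece_inter_stackPiece {i j : Fin N} {s t : Fin m} (h : i ≠ j ∨ s ≠ t) :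
    volume (stackPiece r y i s ∩ stackPiece r y j t) = 0 := by
  by_cases hst : s = t
  · subst hst
    rcases (h.resolve_right (not_not.2 rfl)).lt_or_gt with h | h
    · exact volume_Icc_inter_Icc_eq_zero_of_le (hr.stackStart_add_le_stackStart hy h s)
    · rw [inter_comm]
      exact volume_Icc_inter_Icc_eq_zero_of_le (hr.stackStart_add_le_stackStart hy h s)
  · exact measure_mono_null
      (inter_subset_inter (hr.stackPiece_subset_Icc hy i s) (hr.stackPiece_subset_Icc hy j t))
      (hr.monotone.volume_Icc_inter_Icc_eq_zero hst)

lemma isAlloc_stackAlloc : IsAlloc (stackAlloc r y) := by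
  refine ⟨fun j => iUnion_subset fun s => (hr.stackPiece_subset_Icc hy j s).trans ?_,
    fun j => ⟨m, _, _, rfl⟩, fun i j hij => ?_⟩
  · exact Icc_subset_Icc (hr.apply_zero ▸ hr.monotone (Fin.zero_le _))
      (hr.apply_last ▸ hr.monotone (Fin.le_last _))
  · simp only [stackAlloc, iUnion_inter, inter_iUnion]
    exact measure_iUnion_null fun s => measure_iUnion_null fun t =>
      hr.volume_stackPiece_inter_stackPiece hy (Or.inl hij)

lemma volume_stackAlloc_inter_gridCell (j : Fin N) (s : Fin m) :
    volume (stackAlloc r y j ∩ gridCell r s) = ENNReal.ofReal (cellLength r s * y j s) := by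
  have hlen : 0 ≤ cellLength r s * y j s := mul_nonneg (hr.cellLength_pos s).le (hy.1 j s)
  have hIcc := hr.stackPiece_subset_Icc hy j s
  have hstart := hIcc (left_mem_Icc.2 (le_add_of_nonneg_right hlen))
  have hend := hIcc (right_mem_Icc.2 (le_add_of_nonneg_right hlen))
  refine le_antisymm ?_ ?_
  · calc volume (stackAlloc r y j ∩ gridCell r s)
          ≤ ∑ t, volume (stackPiece r y j t ∩ gridCell r s) := by
          rw [stackAlloc, iUnion_inter]
          exact measure_iUnion_fintype_le _ _
      _ = volume (stackPiece r y j s ∩ gridCell r s) := by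
          refine Finset.sum_eq_single s (fun t _ hts => measure_mono_null
            (inter_subset_inter (hr.stackPiece_subset_Icc hy j t) Ico_subset_Icc_self)
            (hr.monotone.volume_Icc_inter_Icc_eq_zero hts)) (by simp)
      _ ≤ volume (stackPiece r y j s) := measure_mono inter_subset_left
      _ = ENNReal.ofReal (cellLength r s * y j s) := by
          rw [stackPiece, Real.volume_Icc, add_sub_cancel_left]
  · calc ENNReal.ofReal (cellLength r s * y j s)
          = volume (Ico (stackStart r y j s) (stackStart r y j s + cellLength r s * y j s)) := by
          rw [Real.volume_Ico, add_sub_cancel_left]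
      _ ≤ volume (stackAlloc r y j ∩ gridCell r s) := measure_mono fun x hx =>
          ⟨mem_iUnion.2 ⟨s, Ico_subset_Icc_self hx⟩,
            ⟨hstart.1.trans hx.1, hx.2.trans_le hend.2⟩⟩

lemma cellShare_stackAlloc : cellShare r (stackAlloc r y) = y := by
  ext j s
  rw [cellShare, measureReal_def, hr.volume_stackAlloc_inter_gridCell hy,
    ENNReal.toReal_ofReal (mul_nonneg (hr.cellLength_pos s).le (hy.1 j s))]
  field_simp [(hr.cellLength_pos s).ne']

end IsGrid

end Stacking

lemma cakeval_nonneg {f : ℝ → ℝ} (hf : ∀ x, 0 ≤ f x) {S : Set ℝ} (hS : FinUnionIcc S) :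
    0 ≤ cakeval f S :=
  setIntegral_nonneg hS.measurableSet fun x _ => hf x

lemma IsAllocOn.update_empty {n : ℕ} {C : Set ℝ} {A : Fin n → Set ℝ} (hA : IsAllocOn C A)
    (i : Fin n) : IsAllocOn C (Function.update A i ∅) := by
  have hsub : ∀ j, Function.update A i ∅ j ⊆ A j := fun j => by
    rcases eq_or_ne j i with rfl | hj
    · simp
    · simp [hj]
  refine ⟨fun j => (hsub j).trans (hA.1 j), fun j => ?_, fun j k hjk =>
    measure_mono_null (inter_subset_inter (hsub j) (hsub k)) (hA.2.2 hjk)⟩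
  rcases eq_or_ne j i with rfl | hj
  · exact ⟨0, Fin.elim0, Fin.elim0, by simp⟩
  · simpa [hj] using hA.2.1 j

section MNW

variable {N : ℕ} {g : Fin N → ℝ → ℝ}

lemma exists_isAlloc_forall_cakeval_pos (hg : ∀ j, ValidDensity (g j)) :
    ∃ B : Fin N → Set ℝ, IsAlloc B ∧ ∀ j, 0 < cakeval (g j) (B j) := by
  obtain ⟨m, r, c, hr, hc⟩ := exists_isGrid_constOnCells fun j => (hg j).1
  set y : Fin N → Fin m → ℝ := fun _ _ => (N : ℝ)⁻¹
  have hy : y ∈ shareSet (Fin N) (Fin m) :=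
    ⟨fun _ _ => inv_nonneg.2 N.cast_nonneg,
      fun _ => by simpa [y] using mul_inv_le_one (a := (N : ℝ))⟩
  refine ⟨stackAlloc r y, hr.isAlloc_stackAlloc hy, fun j => ?_⟩
  have hwhole : cakeval (g j) (Icc 0 1) = ∑ s, c j s * cellLength r s := by
    rw [hr.cakeval_eq_sum (hc j) measurableSet_Icc subset_rfl]
    simp_rw [inter_eq_right.2 fun x hx => Ico_subset_Icc_self (hr.gridCell_subset_Ico _ hx),
      hr.volume_real_gridCell]
  have hN : (0 : ℝ) < N := Nat.cast_pos.2 (Fin.pos j)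
  rw [hr.cakeval_eq_sum_cellShare (hc j) (hr.isAlloc_stackAlloc hy), hr.cellShare_stackAlloc hy,
    ← Finset.mul_sum, ← hwhole]
  exact mul_pos (inv_pos.2 hN) (hg j).2.2

lemma cakeval_pos_of_isMNW (hg : ∀ j, ValidDensity (g j)) {A : Fin N → Set ℝ} (hA : IsMNW g A)
    (j : Fin N) : 0 < cakeval (g j) (A j) := by
  obtain ⟨B, hB, hBpos⟩ := exists_isAlloc_forall_cakeval_pos hg
  have hprod : 0 < nashProd g A := (Finset.prod_pos fun j _ => hBpos j).trans_le (hA.2 B hB)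
  exact (cakeval_nonneg (hg j).2.1 (hA.1.2.1 j)).lt_of_ne'
    (Finset.prod_ne_zero_iff.1 hprod.ne' j (Finset.mem_univ j))

theorem prod_erase_le_exp_one_mul_of_isMNW (hg : ∀ j, ValidDensity (g j))
    {A B : Fin N → Set ℝ} (hA : IsMNW g A) (hB : IsAlloc B) (i : Fin N) :
    ∏ j ∈ Finset.univ.erase i, cakeval (g j) (B j) ≤
      Real.exp 1 * ∏ j ∈ Finset.univ.erase i, cakeval (g j) (A j) := by
  obtain ⟨m, r, c, hr, hc⟩ := exists_isGrid_constOnCells fun j => (hg j).1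
  set V : Fin N → Fin m → ℝ := fun j s => c j s * cellLength r s
  have hval : ∀ {B}, IsAlloc B → ∀ j, cakeval (g j) (B j) = shareValue V j (cellShare r B) :=
    fun hB j => hr.cakeval_eq_sum_cellShare (hc j) hB j
  have hmax : IsMaxOn (fun z => ∏ j, shareValue V j z) (shareSet _ _) (cellShare r A) :=
    fun y hy => by
      have := hA.2 _ (hr.isAlloc_stackAlloc hy)
      simp only [nashProd, hval (hr.isAlloc_stackAlloc hy), hval hA.1,
        hr.cellShare_stackAlloc hy] at this
      exact this
  simp only [hval hB, hval hA.1]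
  exact prod_erase_le_exp_one_mul_of_isMaxOn_prod (convex_shareSet _ _) hmax
    (hr.cellShare_mem_shareSet hA.1) (hr.cellShare_mem_shareSet hB)
    (fun j => hval hA.1 j ▸ cakeval_pos_of_isMNW hg hA j)
    (fun j => hval hB j ▸ cakeval_nonneg (hg j).2.1 (hB.2.1 j)) i

end MNW

/-- Upper bound of Theorem 4.3: for the Partial Allocation mechanism,
`v_1(A_1') ≤ e · y_1 · v_1(A_1)`, where `A, y_1` come from the truthful run and
`A'` from the run on the misreported profile.  Since the piece agent 1 (index `0`)
receives after misreporting is contained in `A_1'` and his truthful PA utility is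
`y_1 · v_1(A_1)`, the incentive ratio of the PA mechanism in cake cutting is at
most `e`. -/
theorem pa_incentive_ratio_upper (n : ℕ) (f : Fin (n + 1) → ℝ → ℝ) (f1' : ℝ → ℝ)
    (hf : ∀ j, ValidDensity (f j)) (hf1' : ValidDensity f1')
    (A A' A1 : Fin (n + 1) → Set ℝ)
    (hA : IsMNW f A) (hA' : IsMNW (Function.update f 0 f1') A')
    (hA1 : IsMNWWithout f 0 A1) :
    cakeval (f 0) (A' 0) ≤
      Real.exp 1 *
        (((∏ j ∈ Finset.univ.erase 0, cakeval (f j) (A j)) /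
            (∏ j ∈ Finset.univ.erase 0, cakeval (f j) (A1 j))) * cakeval (f 0) (A 0)) := by
  set g := Function.update f 0 f1'
  have hg : ∀ j, ValidDensity (g j) := fun j => by
    rcases eq_or_ne j 0 with rfl | hj <;> simp [g, *]
  have hgf : ∀ j ∈ Finset.univ.erase 0, g j = f j := fun j hj =>
    Function.update_of_ne (Finset.ne_of_mem_erase hj) _ _
  have hprod : ∀ B : Fin (n + 1) → Set ℝ, ∏ j ∈ Finset.univ.erase 0, cakeval (g j) (B j) =
      ∏ j ∈ Finset.univ.erase 0, cakeval (f j) (B j) := fun B =>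
    Finset.prod_congr rfl fun j hj => by rw [hgf j hj]
  have hQ : 0 < ∏ j ∈ Finset.univ.erase 0, cakeval (f j) (A' j) :=
    hprod A' ▸ Finset.prod_pos fun j _ => cakeval_pos_of_isMNW hg hA' j
  have hQ_le : ∏ j ∈ Finset.univ.erase 0, cakeval (f j) (A' j) ≤
      ∏ j ∈ Finset.univ.erase 0, cakeval (f j) (A1 j) :=
    (Finset.prod_congr rfl fun j hj => by
      rw [Function.update_of_ne (Finset.ne_of_mem_erase hj)]).trans_le
      (hA1.2.2 _ (hA'.1.update_empty 0) (Function.update_self _ _ _))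
  have hexp := prod_erase_le_exp_one_mul_of_isMNW hg hA' hA1.1 0
  rw [hprod, hprod] at hexp
  have hopt := hA.2 A' hA'.1
  rw [nashProd, nashProd, ← Finset.mul_prod_erase _ _ (Finset.mem_univ 0),
    ← Finset.mul_prod_erase _ _ (Finset.mem_univ 0)] at hopt
  have hα := cakeval_nonneg (hf 0).2.1 (hA'.1.2.1 0)
  rw [div_mul_eq_mul_div, mul_div_assoc', le_div_iff₀ (hQ.trans_le hQ_le)]
  nlinarith [mul_le_mul_of_nonneg_left hexp hα, mul_le_mul_of_nonneg_left hopt (Real.exp_pos 1).le]
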